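/- Let W > 0, let σ, κ : ℝ → ℝ be continuous and strictly positive on [0,W], and let a > 0, b > 0, E ∈ ℝ. Suppose (φe¹, φl¹) and (φe², φl²) are both solutions of the 1D coupled porous-electrode system on [0,W] whose Neumann data agree at both endpoints (σ(0)·(φe¹)'(0) = σ(0)·(φe²)'(0), σ(W)·(φe¹)'(W) = σ(W)·(φe²)'(W), κ(0)·(φl¹)'(0) = κ(0)·(φl²)'(0), κ(W)·(φl¹)'(W) = κ(W)·(φl²)'(W)). Then the overpotential is uniquely determined: φe¹(x) − φl¹(x) = φe²(x) − φl²(x) for all x ∈ [0,W]. -/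

import Mathlib

/-!
Write `ηᵢ = φeᵢ - φlᵢ`, `f = σ (φe₁' - φe₂')` and `F η = a sinh (b (η - E))`, which is strictly
increasing. Each solution conserves its total current `σ φe' + κ φl'`, so the data at `0` give
`κ (φl₁' - φl₂') = -f` and hence `(η₁ - η₂)' = (σ⁻¹ + κ⁻¹) f`, while `f' = F η₁ - F η₂`. Thus
`(f (η₁ - η₂))' = (F η₁ - F η₂)(η₁ - η₂) + (σ⁻¹ + κ⁻¹) f² ≥ 0`; as `f` vanishes at both ends, the
product is constant and its derivative vanishes, so `(F η₁ - F η₂)(η₁ - η₂) = 0`, which forces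
`η₁ = η₂` inside `(0, W)`, and by continuity on `[0, W]`.
-/

open Set

noncomputable section

/-- `(φe, φl)` is a solution of the 1D coupled porous-electrode system on `[0, W]`. -/
def IsSolution1D (W : ℝ) (σ κ : ℝ → ℝ) (a b E : ℝ) (φe φl : ℝ → ℝ) : Prop :=
  ContDiffOn ℝ 1 φe (Icc 0 W) ∧ ContDiffOn ℝ 1 φl (Icc 0 W) ∧
  ContDiffOn ℝ 1 (fun x => σ x * deriv φe x) (Icc 0 W) ∧
  ContDiffOn ℝ 1 (fun x => κ x * deriv φl x) (Icc 0 W) ∧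
  (∀ x ∈ Icc 0 W, deriv (fun y => σ y * deriv φe y) x
      = a * Real.sinh (b * (φe x - φl x - E))) ∧
  (∀ x ∈ Icc 0 W, deriv (fun y => κ y * deriv φl y) x
      = -(a * Real.sinh (b * (φe x - φl x - E))))

theorem ContDiffOn.hasDerivAt_of_mem_Ioo {f : ℝ → ℝ} {l r x : ℝ}
    (hf : ContDiffOn ℝ 1 f (Icc l r)) (hx : x ∈ Ioo l r) : HasDerivAt f (deriv f x) x :=
  ((hf.differentiableOn one_ne_zero).differentiableAt (Icc_mem_nhds hx.1 hx.2)).hasDerivAt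

theorem monotoneOn_Icc_of_hasDerivAt_nonneg {f f' : ℝ → ℝ} {l r : ℝ}
    (hf : ContinuousOn f (Icc l r)) (hf' : ∀ x ∈ Ioo l r, HasDerivAt f (f' x) x)
    (hf'₀ : ∀ x ∈ Ioo l r, 0 ≤ f' x) : MonotoneOn f (Icc l r) :=
  monotoneOn_of_hasDerivWithinAt_nonneg (convex_Icc l r) hf
    (fun x hx => (hf' x (by rwa [interior_Icc] at hx)).hasDerivWithinAt)
    (fun x hx => hf'₀ x (by rwa [interior_Icc] at hx))

theorem constant_of_hasDerivAt_zero_Ioo {f : ℝ → ℝ} {l r : ℝ}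
    (hf : ContinuousOn f (Icc l r)) (hf' : ∀ x ∈ Ioo l r, HasDerivAt f 0 x) :
    ∀ x ∈ Icc l r, f x = f l := by
  intro x hx
  have hmono := monotoneOn_Icc_of_hasDerivAt_nonneg hf hf' fun _ _ => le_rfl
  have hanti := monotoneOn_Icc_of_hasDerivAt_nonneg hf.neg (fun x hx => (hf' x hx).neg)
    fun _ _ => neg_zero.ge
  have hl : l ∈ Icc l r := left_mem_Icc.2 (hx.1.trans hx.2)
  exact le_antisymm (neg_le_neg_iff.1 (hanti hl hx hx.1)) (hmono hl hx hx.1)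

theorem MonotoneOn.hasDerivAt_eq_zero {f : ℝ → ℝ} {l r x f' : ℝ}
    (hf : MonotoneOn f (Icc l r)) (hlr : f l = f r) (hx : x ∈ Ioo l r)
    (hf' : HasDerivAt f f' x) : f' = 0 := by
  have hl : l ∈ Icc l r := left_mem_Icc.2 (hx.1.trans hx.2).le
  have hr : r ∈ Icc l r := right_mem_Icc.2 (hx.1.trans hx.2).le
  refine IsLocalMax.hasDerivAt_eq_zero ?_ hf'
  filter_upwards [Icc_mem_nhds hx.1 hx.2] with y hy
  calc f y ≤ f r := hf hy hr hy.2
    _ = f l := hlr.symm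
    _ ≤ f x := hf hl (Ioo_subset_Icc_self hx) hx.1.le

theorem eqOn_Icc_of_hasDerivAt_strictMono_flux {F : ℝ → ℝ} (hF : StrictMono F)
    {η₁ η₂ f c : ℝ → ℝ} {l r : ℝ} (hlr : l < r)
    (hη₁ : ContinuousOn η₁ (Icc l r)) (hη₂ : ContinuousOn η₂ (Icc l r))
    (hf : ContinuousOn f (Icc l r)) (hfl : f l = 0) (hfr : f r = 0)
    (hf' : ∀ x ∈ Ioo l r, HasDerivAt f (F (η₁ x) - F (η₂ x)) x)
    (hη' : ∀ x ∈ Ioo l r, HasDerivAt (η₁ - η₂) (c x * f x) x)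
    (hc : ∀ x ∈ Ioo l r, 0 ≤ c x) : EqOn η₁ η₂ (Icc l r) := by
  have hz' : ∀ x ∈ Ioo l r, HasDerivAt (f * (η₁ - η₂))
      ((F (η₁ x) - F (η₂ x)) * (η₁ x - η₂ x) + c x * f x ^ 2) x := fun x hx =>
    ((hf' x hx).mul (hη' x hx)).congr_deriv (by simp only [Pi.sub_apply]; ring)
  have hreact : ∀ x, 0 ≤ (F (η₁ x) - F (η₂ x)) * (η₁ x - η₂ x) := fun x =>
    (hF.monotone.monovary monotone_id).sub_mul_sub_nonneg (η₂ x) (η₁ x)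
  have hmono : MonotoneOn (f * (η₁ - η₂)) (Icc l r) :=
    monotoneOn_Icc_of_hasDerivAt_nonneg (hf.mul (hη₁.sub hη₂)) hz' fun x hx =>
      add_nonneg (hreact x) (mul_nonneg (hc x hx) (sq_nonneg _))
  have hIoo : EqOn η₁ η₂ (Ioo l r) := fun x hx => by
    have hz'_eq_zero := hmono.hasDerivAt_eq_zero (by simp [hfl, hfr]) hx (hz' x hx)
    have hreact0 : (F (η₁ x) - F (η₂ x)) * (η₁ x - η₂ x) = 0 := by
      nlinarith [hreact x, mul_nonneg (hc x hx) (sq_nonneg (f x))]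
    exact (mul_eq_zero.1 hreact0).elim (fun h => hF.injective (sub_eq_zero.1 h)) sub_eq_zero.1
  exact hIoo.of_subset_closure hη₁ hη₂ Ioo_subset_Icc_self (closure_Ioo hlr.ne).ge

namespace IsSolution1D

variable {W a b E : ℝ} {σ κ φe φl : ℝ → ℝ}

theorem hasDerivAt_electrodeFlux (h : IsSolution1D W σ κ a b E φe φl) {x : ℝ}
    (hx : x ∈ Ioo 0 W) :
    HasDerivAt (fun y => σ y * deriv φe y) (a * Real.sinh (b * (φe x - φl x - E))) x := by
  simpa only [h.2.2.2.2.1 x (Ioo_subset_Icc_self hx)] using h.2.2.1.hasDerivAt_of_mem_Ioo hx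

theorem hasDerivAt_electrolyteFlux (h : IsSolution1D W σ κ a b E φe φl) {x : ℝ}
    (hx : x ∈ Ioo 0 W) :
    HasDerivAt (fun y => κ y * deriv φl y) (-(a * Real.sinh (b * (φe x - φl x - E)))) x := by
  simpa only [h.2.2.2.2.2 x (Ioo_subset_Icc_self hx)] using h.2.2.2.1.hasDerivAt_of_mem_Ioo hx

theorem totalCurrent_eq_left (h : IsSolution1D W σ κ a b E φe φl) : ∀ x ∈ Icc 0 W,
    σ x * deriv φe x + κ x * deriv φl x = σ 0 * deriv φe 0 + κ 0 * deriv φl 0 :=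
  constant_of_hasDerivAt_zero_Ioo (h.2.2.1.continuousOn.add h.2.2.2.1.continuousOn) fun _ hx =>
    ((h.hasDerivAt_electrodeFlux hx).add (h.hasDerivAt_electrolyteFlux hx)).congr_deriv
      (add_neg_cancel _)

end IsSolution1D

theorem overpotential_unique_general
    (W : ℝ) (hW : 0 < W) (σ κ : ℝ → ℝ)
    (hσpos : ∀ x ∈ Icc 0 W, 0 < σ x) (hκpos : ∀ x ∈ Icc 0 W, 0 < κ x)
    (a b E : ℝ) (ha : 0 < a) (hb : 0 < b)
    (φe₁ φl₁ φe₂ φl₂ : ℝ → ℝ)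
    (h₁ : IsSolution1D W σ κ a b E φe₁ φl₁)
    (h₂ : IsSolution1D W σ κ a b E φe₂ φl₂)
    (hbc₁ : σ 0 * deriv φe₁ 0 = σ 0 * deriv φe₂ 0)
    (hbc₂ : σ W * deriv φe₁ W = σ W * deriv φe₂ W)
    (hbc₃ : κ 0 * deriv φl₁ 0 = κ 0 * deriv φl₂ 0) :
    ∀ x ∈ Icc 0 W, φe₁ x - φl₁ x = φe₂ x - φl₂ x := by
  have hF : StrictMono fun η => a * Real.sinh (b * (η - E)) :=
    (Real.sinh_strictMono.comp fun _ _ h =>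
      mul_lt_mul_of_pos_left (sub_lt_sub_right h E) hb).const_mul ha
  have hc : ∀ x ∈ Ioo 0 W, 0 ≤ (σ x)⁻¹ + (κ x)⁻¹ := fun x hx =>
    add_nonneg (inv_nonneg.2 (hσpos x (Ioo_subset_Icc_self hx)).le)
      (inv_nonneg.2 (hκpos x (Ioo_subset_Icc_self hx)).le)
  refine eqOn_Icc_of_hasDerivAt_strictMono_flux hF hW
    (h₁.1.continuousOn.sub h₁.2.1.continuousOn) (h₂.1.continuousOn.sub h₂.2.1.continuousOn)
    (h₁.2.2.1.continuousOn.sub h₂.2.2.1.continuousOn)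
    (sub_eq_zero.2 hbc₁) (sub_eq_zero.2 hbc₂)
    (fun x hx => (h₁.hasDerivAt_electrodeFlux hx).sub (h₂.hasDerivAt_electrodeFlux hx))
    (fun x hx => ?_) hc
  have hσ := (hσpos x (Ioo_subset_Icc_self hx)).ne'
  have hκ := (hκpos x (Ioo_subset_Icc_self hx)).ne'
  have hJ₁ := h₁.totalCurrent_eq_left x (Ioo_subset_Icc_self hx)
  have hJ₂ := h₂.totalCurrent_eq_left x (Ioo_subset_Icc_self hx)
  refine (((h₁.1.hasDerivAt_of_mem_Ioo hx).sub (h₁.2.1.hasDerivAt_of_mem_Ioo hx)).sub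
    ((h₂.1.hasDerivAt_of_mem_Ioo hx).sub (h₂.2.1.hasDerivAt_of_mem_Ioo hx))).congr_deriv ?_
  dsimp only [Pi.sub_apply]
  field_simp
  linear_combination hJ₂ - hJ₁ - hbc₁ - hbc₃

/-- The overpotential (equivalently the potential difference `φe − φl`) is uniquely determined
by the galvanostatic (all-Neumann) data. -/
theorem overpotential_unique
    (W : ℝ) (hW : 0 < W) (σ κ : ℝ → ℝ)
    (hσc : ContinuousOn σ (Icc 0 W)) (hκc : ContinuousOn κ (Icc 0 W))
    (hσpos : ∀ x ∈ Icc 0 W, 0 < σ x) (hκpos : ∀ x ∈ Icc 0 W, 0 < κ x)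
    (a b E : ℝ) (ha : 0 < a) (hb : 0 < b)
    (φe₁ φl₁ φe₂ φl₂ : ℝ → ℝ)
    (h₁ : IsSolution1D W σ κ a b E φe₁ φl₁)
    (h₂ : IsSolution1D W σ κ a b E φe₂ φl₂)
    (hbc₁ : σ 0 * deriv φe₁ 0 = σ 0 * deriv φe₂ 0)
    (hbc₂ : σ W * deriv φe₁ W = σ W * deriv φe₂ W)
    (hbc₃ : κ 0 * deriv φl₁ 0 = κ 0 * deriv φl₂ 0)
    (hbc₄ : κ W * deriv φl₁ W = κ W * deriv φl₂ W) :
    ∀ x ∈ Icc 0 W, φe₁ x - φl₁ x = φe₂ x - φl₂ x :=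
  overpotential_unique_general W hW σ κ hσpos hκpos a b E ha hb φe₁ φl₁ φe₂ φl₂ h₁ h₂ hbc₁ hbc₂ hbc₃
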